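/- Let k, l ≥ 1. In the braid group B_{k+l}, one has β_l · t_{k,l} = t_{k,l} · r_k(β_l) and t_{k,l} · β_k = r_l(β_k) · t_{k,l}. -/
import Mathlib


/-!
Formalization of identities in the Artin braid group `B_m`.

We encode "the identity `w₁ = w₂` holds in the braid group `B_m`" via the universal
property of the presented group: it holds in `B_m` iff for every group `G` and every
assignment `σ : ℕ → G` of the generators `σ_1, …, σ_{m-1}` satisfying the defining
braid relations of `B_m`, the corresponding products in `G` are equal.

Braid words are recorded as lists of (1-based) generator indices; `wordProd σ w`
is the corresponding product.  The anti-automorphism `χ` (which fixes each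
generator and reverses the order of the letters of a word) corresponds to
`List.reverse` on words, and the shift homomorphism `r_a : σ_i ↦ σ_{i+a}`
corresponds to `rWord a` on words.
-/

namespace Braid

variable {G : Type*} [Group G]

/-- The product in `G` of the braid word `w` (a list of 1-based generator indices). -/
def wordProd (σ : ℕ → G) (w : List ℕ) : G := (w.map σ).prod

/-- `σ 1, …, σ (m-1)` satisfy the defining relations of the Artin braid group `B_m`:
`σ_i σ_{i+1} σ_i = σ_{i+1} σ_i σ_{i+1}` for `1 ≤ i ≤ m-2`, and
`σ_i σ_j = σ_j σ_i` for `|i - j| ≥ 2`, `1 ≤ i, j ≤ m-1`. -/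
def IsBraidRep (m : ℕ) (σ : ℕ → G) : Prop :=
  (∀ i, 1 ≤ i → i + 2 ≤ m → σ i * σ (i + 1) * σ i = σ (i + 1) * σ i * σ (i + 1)) ∧
  (∀ i j, 1 ≤ i → i + 2 ≤ j → j + 1 ≤ m → σ i * σ j = σ j * σ i)

/-- The word `[1, 2, …, j]` representing `b_j = σ_1 σ_2 ⋯ σ_j` (with `b_0 = e`). -/
def bWord (j : ℕ) : List ℕ := List.range' 1 j

/-- The word representing the superselection braid `β_n = b_{n-1} b_{n-2} ⋯ b_1`
(with `β_1 = β_0 = e`). -/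
def betaWord : ℕ → List ℕ
  | 0 => []
  | n + 1 => bWord n ++ betaWord n

/-- The shift `r_a : σ_i ↦ σ_{i+a}` on braid words. -/
def rWord (a : ℕ) (w : List ℕ) : List ℕ := w.map (· + a)

/-- The word representing `t_{k,l} = r_0(χ(b_l)) · r_1(χ(b_l)) ⋯ r_{k-1}(χ(b_l))`,
the braid clockwise exchanging a block of `k` strands with a block of `l` strands. -/
def tWord : ℕ → ℕ → List ℕ
  | 0, _ => []
  | k + 1, l => tWord k l ++ rWord k (bWord l).reverse

/-! ### Auxiliary lemmas about words and products -/

theorem wordProd_nil (σ : ℕ → G) : wordProd σ [] = 1 := rfl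

theorem wordProd_cons (σ : ℕ → G) (x : ℕ) (w : List ℕ) :
    wordProd σ (x :: w) = σ x * wordProd σ w := by simp [wordProd]

theorem wordProd_singleton (σ : ℕ → G) (x : ℕ) : wordProd σ [x] = σ x := by
  simp [wordProd]

theorem wordProd_append (σ : ℕ → G) (w₁ w₂ : List ℕ) :
    wordProd σ (w₁ ++ w₂) = wordProd σ w₁ * wordProd σ w₂ := by simp [wordProd]

theorem wordProd_rWord (σ : ℕ → G) (a : ℕ) (w : List ℕ) :
    wordProd σ (rWord a w) = wordProd (fun i => σ (i + a)) w := by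
  simp [wordProd, rWord, List.map_map, Function.comp_def]

theorem bWord_succ (n : ℕ) : bWord (n + 1) = bWord n ++ [n + 1] := by
  simp [bWord, List.range'_concat, Nat.add_comm]

theorem revb_succ (n : ℕ) : (bWord (n + 1)).reverse = (n + 1) :: (bWord n).reverse := by
  rw [bWord_succ]; simp

theorem mem_bWord {x j : ℕ} (hx : x ∈ bWord j) : 1 ≤ x ∧ x ≤ j := by
  rw [bWord, List.mem_range'] at hx
  obtain ⟨i, hi, rfl⟩ := hx
  omega

theorem mem_betaWord {x n : ℕ} (hx : x ∈ betaWord n) : 1 ≤ x ∧ x + 1 ≤ n := by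
  induction n with
  | zero => simp [betaWord] at hx
  | succ n ih =>
    rw [betaWord, List.mem_append] at hx
    rcases hx with hx | hx
    · have := mem_bWord hx; omega
    · have := ih hx; omega

theorem mem_rWord {x a : ℕ} {w : List ℕ} (hx : x ∈ rWord a w) :
    ∃ y ∈ w, x = y + a := by
  rw [rWord, List.mem_map] at hx
  obtain ⟨y, hy, rfl⟩ := hx
  exact ⟨y, hy, rfl⟩

theorem IsBraidRep.shift {m : ℕ} {σ : ℕ → G} (h : IsBraidRep m σ) (a m' : ℕ)
    (hm : m' + a ≤ m) : IsBraidRep m' (fun i => σ (i + a)) := by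
  constructor
  · intro i h1 h2
    have := h.1 (i + a) (by omega) (by omega)
    simpa [show i + 1 + a = i + a + 1 by omega] using this
  · intro i j h1 h2 h3
    exact h.2 (i + a) (j + a) (by omega) (by omega) (by omega)

/-- Pushing a group element through a word, replacing each letter's image. -/
theorem wordProd_push (σ τ : ℕ → G) (g : G) (w : List ℕ)
    (h : ∀ x ∈ w, g * σ x = τ x * g) :
    g * wordProd σ w = wordProd τ w * g := by
  induction w with
  | nil => simp [wordProd]
  | cons x w ih =>
    rw [wordProd_cons, wordProd_cons, ← mul_assoc, h x (by simp), mul_assoc,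
      ih (fun y hy => h y (by simp [hy])), ← mul_assoc]

theorem commute_wordProd (σ : ℕ → G) (g : G) (w : List ℕ)
    (h : ∀ x ∈ w, g * σ x = σ x * g) :
    g * wordProd σ w = wordProd σ w * g :=
  wordProd_push σ σ g w h

theorem commute_words (σ : ℕ → G) (w₁ w₂ : List ℕ)
    (h : ∀ x ∈ w₁, ∀ y ∈ w₂, σ x * σ y = σ y * σ x) :
    wordProd σ w₁ * wordProd σ w₂ = wordProd σ w₂ * wordProd σ w₁ := by
  apply commute_wordProd
  intro y hy
  exact (commute_wordProd σ (σ y) w₁ (fun x hx => (h x hx y hy).symm)).symm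

/-! ### Run lemmas -/

/-- Ascending run: `(σ_1 ⋯ σ_n) σ_i = σ_{i+1} (σ_1 ⋯ σ_n)` for `1 ≤ i ≤ n-1`. -/
theorem arun {m : ℕ} {σ : ℕ → G} (h : IsBraidRep m σ) :
    ∀ n, n + 1 ≤ m → ∀ i, 1 ≤ i → i + 1 ≤ n →
      wordProd σ (bWord n) * σ i = σ (i + 1) * wordProd σ (bWord n) := by
  intro n
  induction n with
  | zero => intro _ i _ h2; omega
  | succ n ih =>
    intro hm i h1 h2
    rcases Nat.lt_or_ge i n with hi | hi
    · rw [bWord_succ, wordProd_append, wordProd_singleton, mul_assoc,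
        ← h.2 i (n + 1) h1 (by omega) (by omega), ← mul_assoc,
        ih (by omega) i h1 (by omega), mul_assoc]
    · have hin : i = n := by omega
      subst hin
      obtain ⟨n', rfl⟩ : ∃ n', i = n' + 1 := ⟨i - 1, by omega⟩
      rw [bWord_succ, bWord_succ, wordProd_append, wordProd_append,
        wordProd_singleton, wordProd_singleton]
      have hbr := h.1 (n' + 1) (by omega) (by omega)
      have hcomm : σ (n' + 2) * wordProd σ (bWord n') = wordProd σ (bWord n') * σ (n' + 2) := by
        apply commute_wordProd
        intro x hx
        have := mem_bWord hx
        exact (h.2 x (n' + 2) this.1 (by omega) (by omega)).symm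
      calc wordProd σ (bWord n') * σ (n' + 1) * σ (n' + 1 + 1) * σ (n' + 1)
          = wordProd σ (bWord n') * (σ (n' + 1) * σ (n' + 2) * σ (n' + 1)) := by
            simp [mul_assoc]
        _ = wordProd σ (bWord n') * (σ (n' + 2) * σ (n' + 1) * σ (n' + 2)) := by rw [← hbr]
        _ = wordProd σ (bWord n') * σ (n' + 2) * (σ (n' + 1) * σ (n' + 2)) := by
            simp [mul_assoc]
        _ = σ (n' + 2) * wordProd σ (bWord n') * (σ (n' + 1) * σ (n' + 2)) := by rw [← hcomm]
        _ = σ (n' + 1 + 1) * (wordProd σ (bWord n') * σ (n' + 1) * σ (n' + 1 + 1)) := by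
            simp [mul_assoc]

/-- Descending run: `(σ_n ⋯ σ_1) σ_{i+1} = σ_i (σ_n ⋯ σ_1)` for `1 ≤ i ≤ n-1`. -/
theorem drun {m : ℕ} {σ : ℕ → G} (h : IsBraidRep m σ) :
    ∀ n, n + 1 ≤ m → ∀ i, 1 ≤ i → i + 1 ≤ n →
      wordProd σ (bWord n).reverse * σ (i + 1) = σ i * wordProd σ (bWord n).reverse := by
  intro n
  induction n with
  | zero => intro _ i _ h2; omega
  | succ n ih =>
    intro hm i h1 h2
    rcases Nat.lt_or_ge i n with hi | hi
    · rw [revb_succ, wordProd_cons, mul_assoc, ih (by omega) i h1 (by omega), ← mul_assoc,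
        ← h.2 i (n + 1) h1 (by omega) (by omega), mul_assoc]
    · have hin : i = n := by omega
      subst hin
      obtain ⟨n', rfl⟩ : ∃ n', i = n' + 1 := ⟨i - 1, by omega⟩
      rw [revb_succ, revb_succ, wordProd_cons, wordProd_cons]
      have hbr := h.1 (n' + 1) (by omega) (by omega)
      have hcomm : σ (n' + 2) * wordProd σ (bWord n').reverse
          = wordProd σ (bWord n').reverse * σ (n' + 2) := by
        apply commute_wordProd
        intro x hx
        have := mem_bWord (List.mem_reverse.mp hx)
        exact (h.2 x (n' + 2) this.1 (by omega) (by omega)).symm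
      calc σ (n' + 1 + 1) * (σ (n' + 1) * wordProd σ (bWord n').reverse) * σ (n' + 1 + 1)
          = σ (n' + 2) * σ (n' + 1) * (wordProd σ (bWord n').reverse * σ (n' + 2)) := by
            simp [mul_assoc]
        _ = σ (n' + 2) * σ (n' + 1) * (σ (n' + 2) * wordProd σ (bWord n').reverse) := by
            rw [← hcomm]
        _ = σ (n' + 2) * σ (n' + 1) * σ (n' + 2) * wordProd σ (bWord n').reverse := by
            simp [mul_assoc]
        _ = σ (n' + 1) * σ (n' + 2) * σ (n' + 1) * wordProd σ (bWord n').reverse := by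
            rw [← hbr]
        _ = σ (n' + 1) * (σ (n' + 1 + 1) * (σ (n' + 1) * wordProd σ (bWord n').reverse)) := by
            simp [mul_assoc]

/-! ### The Garside element -/

/-- `Δ_{n+1} = Δ_n · (σ_n σ_{n-1} ⋯ σ_1)`. -/
theorem betaQ {m : ℕ} {σ : ℕ → G} (h : IsBraidRep m σ) :
    ∀ n, n + 1 ≤ m →
      wordProd σ (betaWord (n + 1))
        = wordProd σ (betaWord n) * wordProd σ (bWord n).reverse := by
  intro n
  induction n with
  | zero => intro _; simp [betaWord, bWord, wordProd]
  | succ n ih =>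
    intro hm
    have IH := ih (by omega)
    have hcomm : σ (n + 1) * wordProd σ (betaWord n)
        = wordProd σ (betaWord n) * σ (n + 1) := by
      apply commute_wordProd
      intro x hx
      have := mem_betaWord hx
      exact (h.2 x (n + 1) this.1 (by omega) (by omega)).symm
    have e0 : wordProd σ (betaWord (n + 1 + 1))
        = wordProd σ (bWord n) * σ (n + 1) * wordProd σ (betaWord (n + 1)) := by
      rw [show betaWord (n + 1 + 1) = bWord (n + 1) ++ betaWord (n + 1) from rfl,
        wordProd_append, bWord_succ, wordProd_append, wordProd_singleton]
    have ebeta : wordProd σ (betaWord (n + 1))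
        = wordProd σ (bWord n) * wordProd σ (betaWord n) := by
      rw [show betaWord (n + 1) = bWord n ++ betaWord n from rfl, wordProd_append]
    calc wordProd σ (betaWord (n + 1 + 1))
        = wordProd σ (bWord n) * σ (n + 1) * wordProd σ (betaWord (n + 1)) := e0
      _ = wordProd σ (bWord n) * σ (n + 1)
            * (wordProd σ (betaWord n) * wordProd σ (bWord n).reverse) := by rw [IH]
      _ = wordProd σ (bWord n) * (σ (n + 1) * wordProd σ (betaWord n))
            * wordProd σ (bWord n).reverse := by simp [mul_assoc]
      _ = wordProd σ (bWord n) * (wordProd σ (betaWord n) * σ (n + 1))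
            * wordProd σ (bWord n).reverse := by rw [hcomm]
      _ = (wordProd σ (bWord n) * wordProd σ (betaWord n))
            * (σ (n + 1) * wordProd σ (bWord n).reverse) := by simp [mul_assoc]
      _ = wordProd σ (betaWord (n + 1)) * wordProd σ (bWord (n + 1)).reverse := by
          rw [← ebeta, revb_succ, wordProd_cons]

/-- The fundamental conjugation: `Δ_n σ_i = σ_j Δ_n` whenever `i + j = n`, `i, j ≥ 1`. -/
theorem betaS {m : ℕ} {σ : ℕ → G} (h : IsBraidRep m σ) :
    ∀ n, n ≤ m → ∀ i j, 1 ≤ i → 1 ≤ j → i + j = n →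
      wordProd σ (betaWord n) * σ i = σ j * wordProd σ (betaWord n) := by
  intro n
  induction n with
  | zero => intro _ i j h1 h2 h3; omega
  | succ n ih =>
    intro hm i j h1 h2 h3
    rcases Nat.lt_or_ge 1 j with hj | hj
    · -- j ≥ 2, so i ≤ n - 1; use Δ_{n+1} = b_n Δ_n
      rw [show betaWord (n + 1) = bWord n ++ betaWord n from rfl, wordProd_append]
      obtain ⟨j', rfl⟩ : ∃ j', j = j' + 1 := ⟨j - 1, by omega⟩
      rw [mul_assoc, ih (by omega) i j' h1 (by omega) (by omega), ← mul_assoc,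
        arun h n (by omega) j' (by omega) (by omega), mul_assoc]
    · -- j = 1, i = n
      have hj1 : j = 1 := by omega
      subst hj1
      have hi : i = n := by omega
      subst hi
      rcases Nat.lt_or_ge i 2 with hi2 | hi2
      · -- n = 1 : β_2 = [1]
        have : i = 1 := by omega
        subst this
        simp [betaWord, bWord, wordProd, List.range']
      · -- n ≥ 2 : use Δ_{n+1} = Δ_n D_n
        rw [betaQ h i (by omega), mul_assoc]
        obtain ⟨i', rfl⟩ : ∃ i', i = i' + 1 := ⟨i - 1, by omega⟩
        rw [drun h (i' + 1) (by omega) i' (by omega) (by omega), ← mul_assoc,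
          ih (by omega) i' 1 (by omega) (by omega) (by omega), mul_assoc]

/-- Splitting `bWord (k+l)` into two blocks. -/
theorem bWord_split (k l : ℕ) : bWord (k + l) = bWord k ++ rWord k (bWord l) := by
  induction l with
  | zero => simp [bWord, rWord]
  | succ l ih =>
    show bWord (k + l + 1) = bWord k ++ rWord k (bWord (l + 1))
    rw [bWord_succ, ih, bWord_succ]
    have harith : l + 1 + k = k + l + 1 := by omega
    simp only [rWord, List.map_append, List.map_cons, List.map_nil, List.append_assoc, harith]

/-- Splitting the reversal of `bWord (k+l)`. -/
theorem revb_split (k l : ℕ) :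
    (bWord (k + l)).reverse = rWord k (bWord l).reverse ++ (bWord k).reverse := by
  rw [bWord_split k l, List.reverse_append]
  simp only [rWord, List.map_reverse]

/-- The key factorization `Δ_{k+l} = t_{k,l} · Δ_k · r_k(Δ_l)`. -/
theorem tFact {σ : ℕ → G} :
    ∀ k l m, IsBraidRep m σ → k + l ≤ m →
      wordProd σ (betaWord (k + l))
        = wordProd σ (tWord k l)
          * (wordProd σ (betaWord k) * wordProd σ (rWord k (betaWord l))) := by
  intro k
  induction k with
  | zero =>
    intro l m h hm
    simp [tWord, betaWord, wordProd_nil, rWord, wordProd]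
  | succ k ih =>
    intro l m h hm
    have hσ' : IsBraidRep (l + 1) (fun i => σ (i + k)) := h.shift k (l + 1) (by omega)
    set T := wordProd σ (tWord k l) with hT
    set A := wordProd σ (betaWord k) with hA
    set Bl := wordProd σ (rWord k (betaWord l)) with hBl
    set C := wordProd σ (rWord k (bWord l).reverse) with hC
    set D := wordProd σ (bWord k).reverse with hD
    set Bl' := wordProd σ (rWord (k + 1) (betaWord l)) with hBl'
    -- Step 1: Bl * C = C * Bl'
    have step1 : C * Bl' = Bl * C := by
      rw [hBl, hBl', hC, wordProd_rWord, wordProd_rWord, wordProd_rWord]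
      refine wordProd_push (fun x => σ (x + (k + 1))) (fun x => σ (x + k)) _ (betaWord l) ?_
      intro x hx
      have hxb := mem_betaWord hx
      have := drun hσ' l (by omega) x hxb.1 (by omega)
      simpa [show x + (k + 1) = x + 1 + k by omega] using this
    -- Step 2: A commutes with C
    have step2 : A * C = C * A := by
      rw [hA, hC]
      apply commute_words
      intro x hx y hy
      obtain ⟨y', hy', rfl⟩ := mem_rWord hy
      have hxb := mem_betaWord hx
      have hyb := mem_bWord (List.mem_reverse.mp hy')
      exact h.2 x (y' + k) hxb.1 (by omega) (by omega)
    -- Step 3: D commutes with Bl'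
    have step3 : D * Bl' = Bl' * D := by
      rw [hD, hBl']
      apply commute_words
      intro x hx y hy
      obtain ⟨y', hy', rfl⟩ := mem_rWord hy
      have hxb := mem_bWord (List.mem_reverse.mp hx)
      have hyb := mem_betaWord hy'
      exact h.2 x (y' + (k + 1)) hxb.1 (by omega) (by omega)
    have hQtop : wordProd σ (betaWord (k + 1 + l))
        = wordProd σ (betaWord (k + l)) * wordProd σ (bWord (k + l)).reverse := by
      rw [show k + 1 + l = k + l + 1 by omega]
      exact betaQ h (k + l) (by omega)
    have hQk := betaQ h k (by omega)
    rw [← hA, ← hD] at hQk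
    have hTk : wordProd σ (tWord (k + 1) l) = T * C := by
      rw [show tWord (k + 1) l = tWord k l ++ rWord k (bWord l).reverse from rfl,
        wordProd_append, hT, hC]
    calc wordProd σ (betaWord (k + 1 + l))
        = wordProd σ (betaWord (k + l)) * wordProd σ (bWord (k + l)).reverse := hQtop
      _ = (T * (A * Bl)) * (C * D) := by
          rw [ih l m h (by omega), revb_split k l, wordProd_append,
            ← hT, ← hBl, ← hC, ← hD]
      _ = T * (A * (Bl * C) * D) := by simp [mul_assoc]
      _ = T * (A * (C * Bl') * D) := by rw [step1]
      _ = T * ((A * C) * (Bl' * D)) := by simp [mul_assoc]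
      _ = T * ((C * A) * (D * Bl')) := by rw [step2, ← step3]
      _ = (T * C) * ((A * D) * Bl') := by simp [mul_assoc]
      _ = wordProd σ (tWord (k + 1) l) * (wordProd σ (betaWord (k + 1)) * Bl') := by
          rw [hTk, hQk]

/-- Let `k, l ≥ 1`.  In the braid group `B_{k+l}`, one has
`β_l ⬝ t_{k,l} = t_{k,l} ⬝ r_k(β_l)` and `t_{k,l} ⬝ β_k = r_l(β_k) ⬝ t_{k,l}`. -/
theorem beta_t_comm (k l : ℕ) (hk : 1 ≤ k) (hl : 1 ≤ l) (σ : ℕ → G)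
    (h : IsBraidRep (k + l) σ) :
    wordProd σ (betaWord l) * wordProd σ (tWord k l) =
      wordProd σ (tWord k l) * wordProd σ (rWord k (betaWord l)) ∧
    wordProd σ (tWord k l) * wordProd σ (betaWord k) =
      wordProd σ (rWord l (betaWord k)) * wordProd σ (tWord k l) := by
  set t := wordProd σ (tWord k l) with ht
  set A := wordProd σ (betaWord k) with hA
  set Bl := wordProd σ (rWord k (betaWord l)) with hBl
  have hF := tFact k l (k + l) h le_rfl
  rw [← ht, ← hA, ← hBl] at hF
  have hσk : IsBraidRep l (fun i => σ (i + k)) := h.shift k l (by omega)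
  -- generator-level identity 1 : σ_i t = t σ_{i+k}  (i + j = l)
  have gen1 : ∀ i j, 1 ≤ i → 1 ≤ j → i + j = l → σ i * t = t * σ (i + k) := by
    intro i j h1 h2 h3
    have e2 : σ (i + k) * A = A * σ (i + k) := by
      rw [hA]
      refine commute_wordProd σ (σ (i + k)) (betaWord k) ?_
      intro x hx
      have := mem_betaWord hx
      exact (h.2 x (i + k) this.1 (by omega) (by omega)).symm
    have e3 : σ (i + k) * Bl = Bl * σ (j + k) := by
      have := betaS hσk l le_rfl j i h2 h1 (by omega)
      rw [hBl, wordProd_rWord]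
      simpa using this.symm
    have e1 : σ i * wordProd σ (betaWord (k + l))
        = wordProd σ (betaWord (k + l)) * σ (j + k) := by
      exact (betaS h (k + l) le_rfl (j + k) i (by omega) h1 (by omega)).symm
    apply mul_right_cancel (b := A * Bl)
    calc σ i * t * (A * Bl) = σ i * wordProd σ (betaWord (k + l)) := by
          rw [hF, mul_assoc]
      _ = wordProd σ (betaWord (k + l)) * σ (j + k) := e1
      _ = t * (A * Bl) * σ (j + k) := by rw [hF]
      _ = t * (A * (Bl * σ (j + k))) := by simp [mul_assoc]
      _ = t * (A * (σ (i + k) * Bl)) := by rw [← e3]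
      _ = t * ((σ (i + k) * A) * Bl) := by rw [e2]; simp [mul_assoc]
      _ = t * σ (i + k) * (A * Bl) := by simp [mul_assoc]
  -- generator-level identity 2 : t σ_i = σ_{i+l} t  (i + j = k)
  have gen2 : ∀ i j, 1 ≤ i → 1 ≤ j → i + j = k → t * σ i = σ (i + l) * t := by
    intro i j h1 h2 h3
    have e2 : σ i * A = A * σ j := by
      rw [hA]
      exact (betaS h k (by omega) j i h2 h1 (by omega)).symm
    have e3 : σ j * Bl = Bl * σ j := by
      rw [hBl]
      refine commute_wordProd σ (σ j) (rWord k (betaWord l)) ?_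
      intro x hx
      obtain ⟨y, hy, rfl⟩ := mem_rWord hx
      have := mem_betaWord hy
      exact h.2 j (y + k) h2 (by omega) (by omega)
    have e1 : wordProd σ (betaWord (k + l)) * σ j
        = σ (i + l) * wordProd σ (betaWord (k + l)) :=
      betaS h (k + l) le_rfl j (i + l) h2 (by omega) (by omega)
    apply mul_right_cancel (b := A * Bl)
    calc t * σ i * (A * Bl) = t * ((σ i * A) * Bl) := by simp [mul_assoc]
      _ = t * ((A * σ j) * Bl) := by rw [e2]
      _ = t * (A * (σ j * Bl)) := by simp [mul_assoc]
      _ = t * (A * (Bl * σ j)) := by rw [e3]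
      _ = t * (A * Bl) * σ j := by simp [mul_assoc]
      _ = wordProd σ (betaWord (k + l)) * σ j := by rw [hF]
      _ = σ (i + l) * wordProd σ (betaWord (k + l)) := e1
      _ = σ (i + l) * (t * (A * Bl)) := by rw [hF]
      _ = σ (i + l) * t * (A * Bl) := by simp [mul_assoc]
  constructor
  · -- β_l t = t r_k(β_l)
    have key := wordProd_push (fun x => σ (x + k)) σ t (betaWord l) ?_
    · rw [hBl, wordProd_rWord]
      exact key.symm
    · intro x hx
      have hxb := mem_betaWord hx
      exact (gen1 x (l - x) hxb.1 (by omega) (by omega)).symm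
  · -- t β_k = r_l(β_k) t
    have key := wordProd_push σ (fun x => σ (x + l)) t (betaWord k) ?_
    · rw [hA, wordProd_rWord]
      exact key
    · intro x hx
      have hxb := mem_betaWord hx
      exact gen2 x (k - x) hxb.1 (by omega) (by omega)

end Braid
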